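/- For n ≥ 2, the centre of the group D_n (the subgroup of Graphs(n+1) ⋊ S_{n+1} generated by x_1,...,x_n) has order 2 if n ≡ 0 (mod 4), and is trivial otherwise. -/

import Mathlib

open Equiv Finset

abbrev Vtx (n : ℕ) := Fin (n+1)
abbrev Edge (n : ℕ) := {e : Sym2 (Vtx n) // ¬ e.IsDiag}
abbrev Graphs (n : ℕ) := Edge n → ZMod 2

/-- relabelling of edges by a permutation of vertices -/
def permEdge {n : ℕ} (σ : Perm (Vtx n)) : Edge n ≃ Edge n where
  toFun e := ⟨Sym2.map σ e.1, by
    simpa [Sym2.isDiag_map σ.injective] using e.2⟩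
  invFun e := ⟨Sym2.map σ.symm e.1, by
    simpa [Sym2.isDiag_map σ.symm.injective] using e.2⟩
  left_inv e := by
    ext1
    simp [Sym2.map_map]
  right_inv e := by
    ext1
    simp [Sym2.map_map]

/-- action of a vertex permutation on graphs -/
def gact {n : ℕ} (σ : Perm (Vtx n)) : Graphs n ≃+ Graphs n where
  toFun g := fun e => g ((permEdge σ).symm e)
  invFun g := fun e => g (permEdge σ e)
  left_inv g := by funext e; simp
  right_inv g := by funext e; simp
  map_add' g h := rfl

lemma gact_mul {n : ℕ} (σ τ : Perm (Vtx n)) (g : Graphs n) :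
    gact (σ * τ) g = gact σ (gact τ g) := by
  funext e
  simp only [gact, AddEquiv.coe_mk, Equiv.coe_fn_mk, Equiv.symm]
  congr 1
  ext1
  simp [permEdge, Sym2.map_map]
  rfl

/-- the action as a homomorphism to automorphisms, multiplicatively -/
def φn (n : ℕ) : Perm (Vtx n) →* MulAut (Multiplicative (Graphs n)) where
  toFun σ := AddEquiv.toMultiplicative (gact σ)
  map_one' := by
    ext g : 1
    simp [gact, permEdge, Equiv.Perm.one_symm]
  map_mul' σ τ := by
    ext g : 1
    exact gact_mul σ τ g.toAdd

/-- the ambient group `Graphs(n+1) ⋊ S_{n+1}` -/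
abbrev DG (n : ℕ) := SemidirectProduct (Multiplicative (Graphs n)) (Perm (Vtx n)) (φn n)

/-- the single-edge graph with edge `{u,v}` -/
def single {n : ℕ} (u v : Vtx n) : Graphs n :=
  fun e => if e.1 = s(u, v) then 1 else 0

/-- the generator `x_m = (e_{0m}, (0 m))` -/
def xgen {n : ℕ} (m : Vtx n) : DG n :=
  ⟨Multiplicative.ofAdd (single 0 m), Equiv.swap 0 m⟩

/-- the degree of a vertex in a graph -/
def deg {n : ℕ} (g : Graphs n) (v : Vtx n) : ℕ :=
  (Finset.univ.filter (fun e : Edge n => v ∈ e.1 ∧ g e = 1)).card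

/-- the number of edges of a graph -/
def nedges {n : ℕ} (g : Graphs n) : ℕ :=
  (Finset.univ.filter (fun e : Edge n => g e = 1)).card

/-- all degrees even and an even number of edges -/
def evenGraph {n : ℕ} (g : Graphs n) : Prop :=
  (∀ v : Vtx n, Even (deg g v)) ∧ Even (nedges g)

/-- the subgroup generated by the `x_m`, `m = 1, …, n` -/
def Dn (n : ℕ) : Subgroup (DG n) :=
  Subgroup.closure {x | ∃ m : Vtx n, m ≠ 0 ∧ x = xgen m}

/-- the complete graph -/
def complete (n : ℕ) : Graphs n := fun _ => 1

/-!
An element of the centre of `D_n` commutes with elements of `D_n` lying over every permutation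
(the transpositions `(0 m)` generate `S_{n+1}`), so its permutation part is central in `S_{n+1}`,
hence trivial, and its graph is `S_{n+1}`-invariant, hence empty or complete.

The complete graph lies in `D_n` exactly when `4 ∣ n`. If `4 ∣ n`, then `D_n` contains every
4-cycle (the one through `0, a, b, c` is `(x_a x_b x_c)^4`), and on the vertex set `ℤ/(n+1)` the
complete graph is a sum of rotation orbits of 4-cycles. Conversely, every element `(g, σ)` of
`D_n` has odd degrees exactly at `0` and `σ 0`, and `(-1)^{|g|} sign σ = 1`, since both properties
hold for the generators and are preserved by products; for `(complete, 1)` this says that `n` and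
`binom(n+1, 2)` are even, i.e. `4 ∣ n`.
-/

open Multiplicative SemidirectProduct

variable {n : ℕ}

lemma graphs_two_zsmul (g : Graphs n) : (2 : ℤ) • g = 0 := by
  rw [two_zsmul]
  exact funext fun _ => CharTwo.add_self_eq_zero _

lemma single_comm (u v : Vtx n) : single u v = single v u := by
  funext e
  simp [single, Sym2.eq_swap (a := u)]

lemma gact_single (σ : Perm (Vtx n)) (u v : Vtx n) :
    gact σ (single u v) = single (σ u) (σ v) := by
  funext e
  have key : Sym2.map σ.symm e.1 = s(u, v) ↔ e.1 = s(σ u, σ v) := by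
    constructor <;> rintro h
    · simpa [Sym2.map_map] using congrArg (Sym2.map σ) h
    · simp [h]
  simp only [gact, single, permEdge, AddEquiv.coe_mk, Equiv.coe_fn_mk, Equiv.coe_fn_symm_mk, key]

lemma gact_one (g : Graphs n) : gact 1 g = g := by
  funext e
  simp [gact, permEdge, Perm.one_def]

lemma gact_complete (σ : Perm (Vtx n)) : gact σ (complete n) = complete n := rfl

lemma mk_mul_mk (g h : Graphs n) (σ τ : Perm (Vtx n)) :
    (⟨ofAdd g, σ⟩ * ⟨ofAdd h, τ⟩ : DG n) = ⟨ofAdd (g + gact σ h), σ * τ⟩ := rfl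

lemma inl_ofAdd_eq_mk (g : Graphs n) : (inl (ofAdd g) : DG n) = ⟨ofAdd g, 1⟩ := rfl

lemma toAdd_left_mul (p q : DG n) :
    (p * q).left.toAdd = p.left.toAdd + gact p.right q.left.toAdd := rfl

lemma toAdd_left_inv (p : DG n) : p⁻¹.left.toAdd = gact p.right⁻¹ (-p.left.toAdd) := rfl

lemma toAdd_φn (σ : Perm (Vtx n)) (g : Multiplicative (Graphs n)) :
    (φn n σ g).toAdd = gact σ g.toAdd := rfl

lemma xgen_mem_Dn {m : Vtx n} (hm : m ≠ 0) : xgen m ∈ Dn n :=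
  Subgroup.subset_closure ⟨m, hm, rfl⟩

def kernelGraphs (n : ℕ) : AddSubgroup (Graphs n) where
  carrier := {g | inl (ofAdd g) ∈ Dn n}
  add_mem' {g h} hg hh := by
    simpa only [Set.mem_ofPred_eq, ofAdd_add, map_mul] using mul_mem hg hh
  zero_mem' := by simpa only [Set.mem_ofPred_eq, ofAdd_zero, map_one] using one_mem _
  neg_mem' {g} hg := by simpa only [Set.mem_ofPred_eq, ofAdd_neg, map_inv] using inv_mem hg

lemma mem_kernelGraphs {g : Graphs n} : g ∈ kernelGraphs n ↔ inl (ofAdd g) ∈ Dn n := Iff.rfl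

def fourCycle (a b c d : Vtx n) : Graphs n := single a b + single b c + single c d + single d a

lemma fourCycle_rotate (a b c d : Vtx n) : fourCycle a b c d = fourCycle b c d a := by
  unfold fourCycle; abel

section
variable {a b c : Vtx n} (ha : a ≠ 0) (hb : b ≠ 0) (hc : c ≠ 0) (hab : a ≠ b) (hac : a ≠ c)
  (hbc : b ≠ c)
include ha hb hc hab hac hbc

lemma xgen_mul_xgen_mul_xgen_sq : (xgen a * xgen b * xgen c) ^ 2 =
    ⟨ofAdd (single b c + single c 0), swap 0 b * swap a c⟩ := by
  simp only [xgen, sq, mk_mul_mk, map_add, gact_single, Perm.mul_apply, swap_apply_left,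
    swap_apply_right, swap_apply_of_ne_of_ne, ha, hb, hc, hab, hac, hbc,
    hab.symm, hac.symm, hbc.symm, ne_eq, not_false_eq_true]
  refine SemidirectProduct.ext ?_ ?_
  · show ofAdd _ = ofAdd _
    congr 1
    abel_nf
    simp only [graphs_two_zsmul, zero_add]
  · ext x
    rcases eq_or_ne x 0 with rfl | h0
    · simp [swap_apply_of_ne_of_ne, *, Ne.symm]
    rcases eq_or_ne x a with rfl | hxa
    · simp [swap_apply_of_ne_of_ne, *, Ne.symm]
    rcases eq_or_ne x b with rfl | hxb
    · simp [swap_apply_of_ne_of_ne, *, Ne.symm]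
    rcases eq_or_ne x c with rfl | hxc
    · simp [swap_apply_of_ne_of_ne, *, Ne.symm]
    simp [swap_apply_of_ne_of_ne, *]

lemma xgen_mul_xgen_mul_xgen_pow_four :
    (xgen a * xgen b * xgen c) ^ 4 = inl (ofAdd (fourCycle 0 a b c)) := by
  rw [show 4 = 2 * 2 from rfl, pow_mul, xgen_mul_xgen_mul_xgen_sq ha hb hc hab hac hbc, sq,
    mk_mul_mk, inl_ofAdd_eq_mk]
  simp only [map_add, gact_single, Perm.mul_apply, swap_apply_left, swap_apply_right,
    swap_apply_of_ne_of_ne, ha, hab, hbc, ha.symm, hc.symm, hab.symm, ne_eq, not_false_eq_true]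
  refine SemidirectProduct.ext ?_ ?_
  · show ofAdd _ = ofAdd _
    congr 1
    rw [fourCycle]
    abel
  · ext x
    simp only [Perm.coe_mul, Function.comp_apply, swap_apply_def, Perm.coe_one, id_eq]
    split_ifs <;> simp_all

lemma fourCycle_zero_mem_kernelGraphs : fourCycle 0 a b c ∈ kernelGraphs n := by
  rw [mem_kernelGraphs, ← xgen_mul_xgen_mul_xgen_pow_four ha hb hc hab hac hbc]
  exact pow_mem (mul_mem (mul_mem (xgen_mem_Dn ha) (xgen_mem_Dn hb)) (xgen_mem_Dn hc)) 4

end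

lemma fourCycle_zero_left_mem_kernelGraphs {b c d : Vtx n} (hb : b ≠ 0) (hd : d ≠ 0) (hbc : b ≠ c)
    (hbd : b ≠ d) (hcd : c ≠ d) : fourCycle 0 b c d ∈ kernelGraphs n := by
  rcases eq_or_ne c 0 with rfl | hc
  · have : fourCycle 0 b 0 d = 0 := by
      rw [fourCycle, single_comm b 0, single_comm d 0]
      abel_nf
      simp only [graphs_two_zsmul, add_zero]
    exact this ▸ zero_mem _
  · exact fourCycle_zero_mem_kernelGraphs hb hc hd hbc hbd hcd

lemma fourCycle_mem_kernelGraphs_of_ne_zero {a b c d : Vtx n} (hab : a ≠ b) (had : a ≠ d)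
    (hbc : b ≠ c) (hbd : b ≠ d) (hcd : c ≠ d) (hb : b ≠ 0) (hd : d ≠ 0) :
    fourCycle a b c d ∈ kernelGraphs n := by
  have : fourCycle a b c d = fourCycle 0 b c d + fourCycle 0 d a b := by
    rw [fourCycle, fourCycle, fourCycle, single_comm d 0, single_comm b 0]
    abel_nf
    simp only [graphs_two_zsmul, add_zero]
  rw [this]
  exact add_mem (fourCycle_zero_left_mem_kernelGraphs hb hd hbc hbd hcd)
    (fourCycle_zero_left_mem_kernelGraphs hd hb had.symm hbd.symm hab)

lemma fourCycle_mem_kernelGraphs {a b c d : Vtx n} (hab : a ≠ b) (hac : a ≠ c) (had : a ≠ d)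
    (hbc : b ≠ c) (hbd : b ≠ d) (hcd : c ≠ d) : fourCycle a b c d ∈ kernelGraphs n := by
  by_cases h : b ≠ 0 ∧ d ≠ 0
  · exact fourCycle_mem_kernelGraphs_of_ne_zero hab had hbc hbd hcd h.1 h.2
  · have ha : a ≠ 0 := fun ha => h ⟨ha ▸ hab.symm, ha ▸ had.symm⟩
    have hc : c ≠ 0 := fun hc => h ⟨hc ▸ hbc, hc ▸ hcd.symm⟩
    rw [fourCycle_rotate]
    exact fourCycle_mem_kernelGraphs_of_ne_zero hbc hab.symm hcd hac.symm had.symm hc ha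

def fourCycleSpan (n : ℕ) : AddSubgroup (Graphs n) :=
  AddSubgroup.closure {g | ∃ a b c d : Vtx n, a ≠ b ∧ a ≠ c ∧ a ≠ d ∧ b ≠ c ∧ b ≠ d ∧ c ≠ d ∧
    fourCycle a b c d = g}

lemma fourCycleSpan_le_kernelGraphs : fourCycleSpan n ≤ kernelGraphs n := by
  rw [fourCycleSpan, AddSubgroup.closure_le]
  rintro _ ⟨a, b, c, d, hab, hac, had, hbc, hbd, hcd, rfl⟩
  exact fourCycle_mem_kernelGraphs hab hac had hbc hbd hcd

def circulant (c : Vtx n) : Graphs n := ∑ i, single i (i + c)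

lemma sum_single_add_add (p q : Vtx n) : ∑ i, single (i + p) (i + q) = circulant (q - p) :=
  Fintype.sum_equiv (Equiv.addRight p) _ _ fun i => by simp

lemma circulant_neg (c : Vtx n) : circulant (-c) = circulant c := by
  rw [← zero_sub, ← sum_single_add_add, circulant]
  simp [single_comm]

lemma circulant_apply (c u v : Vtx n) (h : ¬ s(u, v).IsDiag) :
    circulant c ⟨s(u, v), h⟩ = (if v - u = c then 1 else 0) + (if u - v = c then 1 else 0) := by
  have huv : u ≠ v := by simpa using h
  simp only [circulant, Finset.sum_apply, single, Sym2.eq_iff]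
  rw [Fintype.sum_eq_add u v huv]
  · congr 1 <;> apply if_congr _ rfl rfl <;> simp [huv, eq_sub_iff_add_eq, add_comm, eq_comm]
  · rintro i ⟨hiu, hiv⟩
    rw [if_neg]
    rintro (⟨rfl, -⟩ | ⟨-, rfl⟩) <;> contradiction

lemma sum_fourCycle_add (p q r s : Vtx n) :
    ∑ i, fourCycle (i + p) (i + q) (i + r) (i + s) =
      circulant (q - p) + circulant (r - q) + circulant (s - r) + circulant (p - s) := by
  simp only [fourCycle, Finset.sum_add_distrib, sum_single_add_add]

lemma circulant_add_circulant_mem_fourCycleSpan {x a : Vtx n} (ha : a ≠ 0) (hx : x ≠ 0)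
    (hxa : x + a ≠ 0) (hxaa : x + a + a ≠ 0) :
    circulant x + circulant (x + a + a) ∈ fourCycleSpan n := by
  have orbit : ∑ i, fourCycle (i + 0) (i + x) (i + (x + a)) (i + -a) =
      circulant x + circulant (x + a + a) := by
    rw [sum_fourCycle_add, sub_zero, add_sub_cancel_left, zero_sub, neg_neg,
      show -a - (x + a) = -(x + a + a) by abel, circulant_neg]
    abel_nf
    simp only [graphs_two_zsmul, zero_add]
  rw [← orbit]
  refine sum_mem fun i _ => AddSubgroup.subset_closure ⟨_, _, _, _, ?_, ?_, ?_, ?_, ?_, ?_, rfl⟩ <;>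
    refine (add_right_injective i).ne fun h => ?_
  · exact hx h.symm
  · exact hxa h.symm
  · exact ha (neg_eq_zero.mp h.symm)
  · exact ha (left_eq_add.mp h)
  · exact hxa (by rw [h, neg_add_cancel])
  · exact hxaa (by rw [h, neg_add_cancel])

lemma complete_eq_sum_circulant (h4 : 4 ∣ n) :
    complete n = ∑ d ∈ univ.filter (fun d : Vtx n => d.val % 2 = 1 ∧ 2 * d.val < n),
      (circulant d + circulant (d + 1)) := by
  -- exactly one of `±(v - u)` lies in `[1, n/2]`, and as `n/2` is even the pairs `d, d + 1`
  -- with `d` odd tile that range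
  funext ⟨e, he⟩
  induction e using Sym2.ind with | h u v => ?_
  have hw : v - u ≠ 0 := sub_ne_zero.mpr (by simpa [eq_comm] using he)
  have shift (w d : Vtx n) : w = d + 1 ↔ w - 1 = d := sub_eq_iff_eq_add.symm
  simp only [Finset.sum_apply, Pi.add_apply, circulant_apply, Finset.sum_add_distrib,
    shift, Finset.sum_ite_eq, Finset.mem_filter, Finset.mem_univ, true_and,
    ← neg_sub v u]
  have hneg := Fin.val_neg (v - u)
  have hsub := Fin.coe_sub_one (v - u)
  have hnegsub := Fin.coe_sub_one (-(v - u))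
  simp only [hw, neg_eq_zero, if_false] at hneg hsub hnegsub
  obtain ⟨k, rfl⟩ := h4
  have := (v - u).isLt
  show (1 : ZMod 2) = _
  split_ifs <;> first | decide | omega

lemma complete_mem_fourCycleSpan (h4 : 4 ∣ n) : complete n ∈ fourCycleSpan n := by
  rw [complete_eq_sum_circulant h4]
  refine sum_mem fun d hd => ?_
  obtain ⟨hd_odd, hd_lt⟩ : d.val % 2 = 1 ∧ 2 * d.val < n := by simpa using hd
  obtain ⟨k, rfl⟩ := h4
  -- `a = 1 / 2` in `ℤ / (4k+1)`
  set a : Vtx (4 * k) := ⟨2 * k + 1, by omega⟩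
  have hda : (d + a).val = d.val + (2 * k + 1) := by
    rw [Fin.val_add, Nat.mod_eq_of_lt (by simp only [a]; omega)]
  have haa : a + a = 1 := by
    ext
    rw [Fin.val_add, Fin.val_one', show a.val + a.val = 1 + (4 * k + 1) by simp only [a]; omega,
      Nat.add_mod_right]
  have h := circulant_add_circulant_mem_fourCycleSpan (x := d) (a := a)
    (Fin.val_ne_zero_iff.mp (by simp [a])) (Fin.val_ne_zero_iff.mp (by omega))
    (Fin.val_ne_zero_iff.mp (by omega)) ?_
  · rwa [add_assoc, haa] at h
  · rw [add_assoc, haa]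
    refine Fin.val_ne_zero_iff.mp ?_
    rw [Fin.val_add_one_of_lt (by simp only [Fin.lt_def, Fin.val_last]; omega)]
    omega

lemma natCast_card_filter_eq_one {ι : Type*} (s : Finset ι) (f : ι → ZMod 2) :
    ((s.filter (f · = 1)).card : ZMod 2) = ∑ i ∈ s, f i := by
  rw [Finset.natCast_card_filter]
  exact Finset.sum_congr rfl fun i _ => by generalize f i = x; fin_cases x <;> rfl

def degreeParity (v : Vtx n) : Graphs n →+ ZMod 2 where
  toFun g := ∑ e with v ∈ e.1, g e
  map_zero' := by simp
  map_add' g h := by simp only [Pi.add_apply, Finset.sum_add_distrib]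

def edgeParity : Graphs n →+ ZMod 2 where
  toFun g := ∑ e, g e
  map_zero' := by simp
  map_add' g h := by simp only [Pi.add_apply, Finset.sum_add_distrib]

lemma degreeParity_apply (g : Graphs n) (v : Vtx n) : degreeParity v g = deg g v := by
  rw [deg, ← Finset.filter_filter, natCast_card_filter_eq_one]
  rfl

lemma edgeParity_apply (g : Graphs n) : edgeParity g = nedges g := by
  rw [nedges, natCast_card_filter_eq_one]
  rfl

lemma degreeParity_gact (σ : Perm (Vtx n)) (g : Graphs n) (v : Vtx n) :
    degreeParity v (gact σ g) = degreeParity (σ⁻¹ v) g := by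
  simp only [degreeParity, AddMonoidHom.coe_mk, ZeroHom.coe_mk, Finset.sum_filter]
  refine Fintype.sum_equiv (permEdge σ).symm _ _ fun e => ?_
  simp [gact, permEdge, Sym2.mem_map, Perm.inv_def]

lemma edgeParity_gact (σ : Perm (Vtx n)) (g : Graphs n) : edgeParity (gact σ g) = edgeParity g :=
  Equiv.sum_comp (permEdge σ).symm g

lemma degreeParity_single {u v : Vtx n} (huv : u ≠ v) (w : Vtx n) :
    degreeParity w (single u v) = (if w = u then 1 else 0) + (if w = v then 1 else 0) := by
  have huv' : ¬ s(u, v).IsDiag := by simpa using huv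
  simp only [degreeParity, single, AddMonoidHom.coe_mk, ZeroHom.coe_mk, Finset.sum_filter]
  rw [Fintype.sum_eq_single ⟨s(u, v), huv'⟩ fun e he => by
    simp [show e.1 ≠ s(u, v) from fun h => he (Subtype.ext h)]]
  by_cases hu : w = u <;> by_cases hv : w = v <;> simp_all

lemma edgeParity_single {u v : Vtx n} (huv : u ≠ v) : edgeParity (single u v) = 1 := by
  have huv' : ¬ s(u, v).IsDiag := by simpa using huv
  simp only [edgeParity, single, AddMonoidHom.coe_mk, ZeroHom.coe_mk]
  rw [Fintype.sum_eq_single ⟨s(u, v), huv'⟩ fun e he => by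
    simp [show e.1 ≠ s(u, v) from fun h => he (Subtype.ext h)]]
  simp

def oddVertexSubgroup (n : ℕ) : Subgroup (DG n) where
  carrier := {p | ∀ v, degreeParity v p.left.toAdd =
    (if v = 0 then 1 else 0) + (if v = p.right 0 then 1 else 0)}
  mul_mem' {p q} hp hq v := by
    rw [toAdd_left_mul, map_add, degreeParity_gact, hp, hq]
    simp only [Perm.inv_eq_iff_eq, mul_right, Perm.mul_apply, add_assoc, CharTwo.add_cancel_left]
    rfl
  one_mem' v := by
    simp only [one_left, toAdd_one, map_zero, one_right, Perm.one_apply]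
    exact (CharTwo.add_self_eq_zero _).symm
  inv_mem' {p} hp v := by
    rw [toAdd_left_inv, degreeParity_gact, map_neg, inv_inv, hp, add_comm]
    simp only [inv_right, Perm.eq_inv_iff_eq, EmbeddingLike.apply_eq_iff_eq, CharTwo.neg_eq]

lemma Dn_le_oddVertexSubgroup : Dn n ≤ oddVertexSubgroup n := by
  rw [Dn, Subgroup.closure_le]
  rintro _ ⟨m, hm, rfl⟩ v
  simp [xgen, degreeParity_single hm.symm]

def edgeSign (n : ℕ) : Multiplicative (Graphs n) →* ℤˣ where
  toFun g := (-1) ^ edgeParity g.toAdd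
  map_one' := by simp
  map_mul' g h := by simp [uzpow_add]

def paritySign (n : ℕ) : DG n →* ℤˣ :=
  SemidirectProduct.lift (edgeSign n) Perm.sign fun σ => MonoidHom.ext fun g => by
    simp [edgeSign, toAdd_φn, edgeParity_gact, mul_right_comm _ _ (Perm.sign σ)]

lemma neg_one_uzpow_eq_one_iff (x : ZMod 2) : (-1 : ℤˣ) ^ x = 1 ↔ x = 0 := by
  revert x
  decide

lemma Dn_le_ker_paritySign : Dn n ≤ (paritySign n).ker := by
  rw [Dn, Subgroup.closure_le]
  rintro _ ⟨m, hm, rfl⟩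
  show edgeSign n (ofAdd (single 0 m)) * Perm.sign (swap 0 m) = 1
  simp [edgeSign, edgeParity_single hm.symm, Perm.sign_swap hm.symm]

lemma evenGraph_of_mem_kernelGraphs {g : Graphs n} (hg : g ∈ kernelGraphs n) : evenGraph g := by
  constructor
  · intro v
    have h := Dn_le_oddVertexSubgroup hg v
    simp only [left_inl, toAdd_ofAdd, right_inl, Perm.one_apply] at h
    rw [← ZMod.natCast_eq_zero_iff_even, ← degreeParity_apply, h]
    exact CharTwo.add_self_eq_zero _
  · rw [← ZMod.natCast_eq_zero_iff_even, ← edgeParity_apply]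
    have h : edgeSign n (ofAdd g) = 1 := by
      simpa [paritySign] using Dn_le_ker_paritySign hg
    simpa [edgeSign, neg_one_uzpow_eq_one_iff] using h

lemma deg_complete (v : Vtx n) : deg (complete n) v = n := by
  have h : (univ.filter fun e : Edge n => v ∈ e.1 ∧ complete n e = 1).map
      (Function.Embedding.subtype _) = (⊤ : SimpleGraph (Vtx n)).incidenceFinset v := by
    ext e
    simp [complete, SimpleGraph.mem_incidenceFinset, SimpleGraph.incidenceSet, and_comm]
  rw [deg, ← Finset.card_map, h, SimpleGraph.card_incidenceFinset_eq_degree,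
    SimpleGraph.complete_graph_degree]
  simp

lemma nedges_complete : nedges (complete n) = (n + 1).choose 2 := by
  simp only [nedges, complete, Finset.filter_true, Finset.card_univ, Sym2.card_subtype_not_diag,
    Fintype.card_fin]

lemma four_dvd_of_evenGraph_complete (h : evenGraph (complete n)) : 4 ∣ n := by
  obtain ⟨hdeg, hedges⟩ := h
  rw [nedges_complete] at hedges
  obtain ⟨m, rfl⟩ := deg_complete (n := n) 0 ▸ hdeg 0
  have hchoose : (m + m + 1).choose 2 = (m + m + 1) * m := by
    rw [Nat.choose_two_right, Nat.add_sub_cancel,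
      show (m + m + 1) * (m + m) = 2 * ((m + m + 1) * m) by ring, Nat.mul_div_cancel_left _ two_pos]
  rw [hchoose, Nat.even_mul] at hedges
  obtain ⟨j, rfl⟩ := hedges.resolve_left (by simp [Nat.even_add_one])
  omega

lemma complete_mem_kernelGraphs_iff : complete n ∈ kernelGraphs n ↔ 4 ∣ n :=
  ⟨fun h => four_dvd_of_evenGraph_complete (evenGraph_of_mem_kernelGraphs h),
    fun h => fourCycleSpan_le_kernelGraphs (complete_mem_fourCycleSpan h)⟩

lemma map_rightHom_Dn : (Dn n).map (rightHom : DG n →* Perm (Vtx n)) = ⊤ := by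
  rw [Dn, MonoidHom.map_closure, eq_top_iff, ← Perm.closure_isSwap, Subgroup.closure_le]
  rintro _ ⟨u, v, -, rfl⟩
  have h (m : Vtx n) : swap 0 m ∈ Subgroup.closure
      (rightHom '' {x : DG n | ∃ m, m ≠ 0 ∧ x = xgen m}) := by
    rcases eq_or_ne m 0 with rfl | hm
    · rw [swap_self]
      exact one_mem _
    · exact Subgroup.subset_closure ⟨xgen m, ⟨m, hm, rfl⟩, rfl⟩
  exact SubmonoidClass.swap_mem_trans _ (swap_comm u 0 ▸ h u) (h v)

lemma exists_mem_Dn_right_eq (τ : Perm (Vtx n)) : ∃ y ∈ Dn n, y.right = τ :=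
  Subgroup.mem_map.mp (map_rightHom_Dn ▸ Subgroup.mem_top τ)

lemma Equiv.Perm.eq_one_of_forall_commute {α : Type*} [Fintype α] [DecidableEq α]
    (hα : 2 < Fintype.card α) {σ : Perm α} (hσ : ∀ τ : Perm α, Commute σ τ) : σ = 1 := by
  ext a
  have fixes_or (b : α) (hb : b ≠ a) : σ a = a ∨ σ a = b := by
    by_contra! h
    have hab := congrArg (· a) (hσ (swap a b)).eq
    simp only [Perm.mul_apply, swap_apply_left, swap_apply_of_ne_of_ne h.1 h.2] at hab
    exact hb (σ.injective hab)
  have hcard : 1 < (univ.erase a).card := by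
    rw [card_erase_of_mem (mem_univ a), card_univ]
    omega
  obtain ⟨b, hb, c, hc, hbc⟩ := Finset.one_lt_card.mp hcard
  rcases fixes_or b (ne_of_mem_erase hb) with h | h
  · exact h
  rcases fixes_or c (ne_of_mem_erase hc) with h' | h'
  · exact h'
  · exact absurd (h.symm.trans h') hbc

lemma Sym2.exists_perm_map_eq {α : Type*} [DecidableEq α] {z z' : Sym2 α} (hz : ¬ z.IsDiag)
    (hz' : ¬ z'.IsDiag) : ∃ τ : Perm α, z.map τ = z' := by
  induction z using Sym2.ind with | h a b => ?_
  induction z' using Sym2.ind with | h c d => ?_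
  have hab : a ≠ b := by simpa using hz
  have hcd : c ≠ d := by simpa using hz'
  have hb : swap a c b ≠ c := fun h =>
    hab ((swap_apply_eq_iff.mp h).trans (swap_apply_right a c)).symm
  refine ⟨swap (swap a c b) d * swap a c, ?_⟩
  simp [Sym2.map_mk, swap_apply_of_ne_of_ne hb.symm hcd]

lemma exists_permEdge_eq (e e' : Edge n) : ∃ τ, permEdge τ e = e' :=
  let ⟨τ, h⟩ := Sym2.exists_perm_map_eq e.2 e'.2
  ⟨τ, Subtype.ext h⟩

lemma eq_zero_or_eq_complete_of_forall_gact_eq {g : Graphs n} (hg : ∀ τ, gact τ g = g) :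
    g = 0 ∨ g = complete n := by
  have hconst (e e' : Edge n) : g e' = g e := by
    obtain ⟨τ, rfl⟩ := exists_permEdge_eq e e'
    conv_lhs => rw [← hg τ]
    exact congrArg g ((permEdge τ).symm_apply_apply e)
  by_cases h : ∃ e, g e = 1
  · obtain ⟨e₀, he₀⟩ := h
    exact Or.inr (funext fun e => (hconst e₀ e).trans he₀)
  · simp only [not_exists] at h
    have ne_one (x : ZMod 2) : x ≠ 1 → x = 0 := by revert x; decide
    exact Or.inl (funext fun e => ne_one _ (h e))

lemma commute_inl_complete (y : DG n) : Commute y (inl (ofAdd (complete n))) := by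
  refine SemidirectProduct.ext ?_ (by simp)
  simp only [mul_left, left_inl, right_inl, map_one, MulAut.one_apply]
  rw [show φn n y.right (ofAdd (complete n)) = ofAdd (complete n) from
    congrArg ofAdd (gact_complete y.right), mul_comm]

lemma eq_one_or_eq_complete_of_mem_center (hn : 2 ≤ n) {x : Dn n}
    (hx : x ∈ Subgroup.center (Dn n)) :
    (x : DG n) = 1 ∨ (x : DG n) = inl (ofAdd (complete n)) := by
  have comm (y : DG n) (hy : y ∈ Dn n) : y * x = x * y :=
    congrArg Subtype.val (Subgroup.mem_center_iff.mp hx ⟨y, hy⟩)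
  have hright : (x : DG n).right = 1 := by
    refine Perm.eq_one_of_forall_commute (by simp only [Fintype.card_fin]; omega) fun τ => ?_
    obtain ⟨y, hy, rfl⟩ := exists_mem_Dn_right_eq τ
    exact (congrArg right (comm y hy)).symm
  have hleft : ∀ τ, gact τ (x : DG n).left.toAdd = (x : DG n).left.toAdd := fun τ => by
    obtain ⟨y, hy, rfl⟩ := exists_mem_Dn_right_eq τ
    have h := congrArg (fun p => p.left.toAdd) (comm y hy)
    rw [toAdd_left_mul, toAdd_left_mul, hright, gact_one, add_comm] at h
    exact add_right_cancel h
  rcases eq_zero_or_eq_complete_of_forall_gact_eq hleft with h | h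
  · exact Or.inl (SemidirectProduct.ext h hright)
  · exact Or.inr (SemidirectProduct.ext h hright)

lemma complete_ne_zero (hn : n ≠ 0) : complete n ≠ 0 := by
  have h : (0 : Vtx n) ≠ Fin.last n := by simp [Fin.ext_iff, Ne.symm hn]
  intro hc
  exact one_ne_zero (congrFun hc ⟨s(0, Fin.last n), by simpa using h⟩)

lemma mem_center_Dn_iff (hn : 2 ≤ n) (x : Dn n) :
    x ∈ Subgroup.center (Dn n) ↔ (x : DG n) = 1 ∨ (x : DG n) = inl (ofAdd (complete n)) := by
  refine ⟨eq_one_or_eq_complete_of_mem_center hn, fun h => ?_⟩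
  refine Subgroup.mem_center_iff.mpr fun y => Subtype.ext ?_
  rcases h with h | h <;> simp only [Subgroup.coe_mul, h, one_mul, mul_one]
  exact commute_inl_complete (y : DG n)

/-- For `n ≥ 2`, the centre of `D_n` has order 2 if `n ≡ 0 (mod 4)` and is trivial
otherwise. -/
theorem stmt14 (n : ℕ) (hn : 2 ≤ n) :
    Nat.card (Subgroup.center (Dn n)) = if n % 4 = 0 then 2 else 1 := by
  rw [← SetLike.coe_sort_coe, Nat.card_coe_set_eq]
  split_ifs with h4
  · have hc := complete_mem_kernelGraphs_iff.mpr (Nat.dvd_of_mod_eq_zero h4)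
    have hcenter : (Subgroup.center (Dn n) : Set (Dn n)) = {1, ⟨_, hc⟩} := by
      ext x
      simp only [SetLike.mem_coe, mem_center_Dn_iff hn, Set.mem_insert_iff,
        Set.mem_singleton_iff, Subtype.ext_iff, OneMemClass.coe_one]
    refine hcenter ▸ Set.ncard_pair fun h => complete_ne_zero (n := n) (by omega) ?_
    exact (congrArg (fun x : Dn n => (x : DG n).left.toAdd) h).symm
  · have hcenter : (Subgroup.center (Dn n) : Set (Dn n)) = {1} := by
      ext x
      simp only [SetLike.mem_coe, mem_center_Dn_iff hn, Set.mem_singleton_iff, Subtype.ext_iff,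
        OneMemClass.coe_one, or_iff_left_iff_imp]
      intro hx
      have hc : complete n ∈ kernelGraphs n := by rw [mem_kernelGraphs, ← hx]; exact x.2
      exact absurd (Nat.mod_eq_zero_of_dvd (complete_mem_kernelGraphs_iff.mp hc)) h4
    rw [hcenter, Set.ncard_singleton]
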